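/- arXiv:2311.16872 — 2 statements merged into one kernel-verified Lean document; each statement's English description precedes it below -/
import Mathlib

section
/- For every positive integer m, the limit as k → ∞ of (2k/(m+2)) · (1/k) · (1 + m/2 − (m/(2k^{2/m})) · ((a(k+1))^{1+2/m} − (a(k+1) − 1)^{1+2/m})) equals 1 − a^{2/m}, for any fixed a ∈ (0, 1]. -/
open Filter Topology

/-!
With `c = 2/m`, `p = 1 + c` and `t = a(k+1)`, the sequence equals
`1 - (m/(m+2)) · ((t^p - (t-1)^p) / t^c) · (t^c / k^c)`.
The first quotient tends to `p = (m+2)/m`, being a rescaled difference quotient of `x ↦ x^p`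
at `1`, and the second tends to `a^c`.
-/

namespace Real

theorem tendsto_slope_rpow_const_one (p : ℝ) :
    Tendsto (slope (fun x : ℝ => x ^ p) 1) (𝓝[≠] 1) (𝓝 p) := by
  have h := Real.hasDerivAt_rpow_const (x := 1) (p := p) (Or.inl one_ne_zero)
  rw [Real.one_rpow, mul_one] at h
  exact hasDerivAt_iff_tendsto_slope.mp h

theorem tendsto_rpow_sub_rpow_sub_one_div_rpow_atTop (p : ℝ) :
    Tendsto (fun t : ℝ => (t ^ p - (t - 1) ^ p) / t ^ (p - 1)) atTop (𝓝 p) := by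
  have h_one_sub_inv : Tendsto (fun t : ℝ => 1 - t⁻¹) atTop (𝓝[≠] 1) := by
    refine tendsto_nhdsWithin_iff.mpr ⟨?_, ?_⟩
    · simpa using tendsto_inv_atTop_zero.const_sub (1 : ℝ)
    · filter_upwards [eventually_gt_atTop 0] with t ht
      simpa using ht.ne'
  refine ((tendsto_slope_rpow_const_one p).comp h_one_sub_inv).congr' ?_
  filter_upwards [eventually_gt_atTop 1] with t ht
  have ht0 : 0 < t := one_pos.trans ht
  have h_pow : (1 - t⁻¹) ^ p = (t - 1) ^ p / t ^ p := by
    rw [← Real.div_rpow (by linarith) ht0.le, sub_div, div_self ht0.ne', one_div]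
  have h_split : t ^ p = t ^ (p - 1) * t := by
    rw [Real.rpow_sub_one ht0.ne']
    field_simp
  have htp : 0 < t ^ (p - 1) := Real.rpow_pos_of_pos ht0 _
  simp only [Function.comp_apply, slope_def_field, Real.one_rpow, h_pow, h_split]
  field_simp
  ring

theorem tendsto_mul_natCast_add_one_rpow_div_natCast_rpow {a : ℝ} (ha : 0 < a) (c : ℝ) :
    Tendsto (fun k : ℕ => (a * ((k : ℝ) + 1)) ^ c / (k : ℝ) ^ c) atTop (𝓝 (a ^ c)) := by
  have h_ratio : Tendsto (fun k : ℕ => a * ((k : ℝ) + 1) / k) atTop (𝓝 a) := by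
    have h := ((tendsto_inv_atTop_nhds_zero_nat (𝕜 := ℝ)).const_add 1).const_mul a
    rw [add_zero, mul_one] at h
    refine h.congr' ?_
    filter_upwards [eventually_gt_atTop 0] with k hk
    have hk0 : (k : ℝ) ≠ 0 := by positivity
    field_simp
  refine ((Real.continuousAt_rpow_const a c (Or.inl ha.ne')).tendsto.comp h_ratio).congr
    fun k => Real.div_rpow (by positivity) (Nat.cast_nonneg k) c

end Real

/-- The rescaled Samworth rank-weight kernel `(2k/(m+2)) · f^k(a)` converges pointwise
to the Samworth kernel `1 - a^(2/m)` for every fixed `a ∈ (0,1]`. -/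
theorem samworth_kernel_limit (m : ℕ) (hm : 0 < m) (a : ℝ) (ha : a ∈ Set.Ioc (0:ℝ) 1) :
    Tendsto (fun k : ℕ =>
      (2 * (k : ℝ) / ((m : ℝ) + 2)) * ((1 / (k : ℝ)) *
        (1 + (m : ℝ) / 2 - ((m : ℝ) / (2 * (k : ℝ) ^ ((2 : ℝ) / (m : ℝ)))) *
          ((a * ((k : ℝ) + 1)) ^ (1 + (2 : ℝ) / (m : ℝ))
            - (a * ((k : ℝ) + 1) - 1) ^ (1 + (2 : ℝ) / (m : ℝ))))))
      atTop (𝓝 (1 - a ^ ((2 : ℝ) / (m : ℝ)))) := by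
  obtain ⟨ha0, -⟩ := ha
  have hm0 : (m : ℝ) ≠ 0 := by positivity
  set c : ℝ := 2 / (m : ℝ)
  have ht : Tendsto (fun k : ℕ => a * ((k : ℝ) + 1)) atTop atTop :=
    (tendsto_atTop_add_const_right atTop 1 tendsto_natCast_atTop_atTop).const_mul_atTop ha0
  have h_diff := Real.tendsto_rpow_sub_rpow_sub_one_div_rpow_atTop (1 + c) |>.comp ht
  rw [add_sub_cancel_left] at h_diff
  have h_lim := (tendsto_const_nhds (x := (1 : ℝ))).sub
    ((tendsto_const_nhds (x := (m : ℝ) / (m + 2))).mul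
      (h_diff.mul (Real.tendsto_mul_natCast_add_one_rpow_div_natCast_rpow ha0 c)))
  have h_value : 1 - (m : ℝ) / (m + 2) * ((1 + c) * a ^ c) = 1 - a ^ c := by
    simp only [c]
    field_simp
  rw [h_value] at h_lim
  refine h_lim.congr' ?_
  filter_upwards [eventually_gt_atTop 0] with k hk
  have hk0 : (0 : ℝ) < k := by exact_mod_cast hk
  have htc : 0 < (a * ((k : ℝ) + 1)) ^ c := Real.rpow_pos_of_pos (by positivity) c
  have hkc : 0 < (k : ℝ) ^ c := Real.rpow_pos_of_pos hk0 c
  simp only [Function.comp_apply]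
  field_simp
  ring
end

section
/- For k > 1 and distances 0 < d_1 < d_k, the weights of Gou et al., s_i = ((d_k − d_i)/(d_k − d_1)) · ((d_k + d_1)/(d_k + d_i)), are proportional (with a positive constant factor independent of i) to (1 − d_i*)/(1 + d_i*) where d_i* = d_i/d_k, i.e., to the Sugeno kernel applied to the normalised distances. -/
/-- The weights of Gou et al. are proportional, with positive constant factor
`(d_k - d_1)/(d_k + d_1)`, to the Sugeno kernel applied to the normalised distances. -/
theorem gou_weights_proportional_sugeno (k : ℕ) (hk : 1 < k) (d : ℕ → ℝ)
    (h0 : 0 < d 1) (h1k : d 1 < d k) (hmono : ∀ i, d 1 ≤ d i ∧ d i ≤ d k) :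
    0 < (d k - d 1) / (d k + d 1) ∧
    ∀ i, ((d k - d i) / (d k - d 1)) * ((d k + d 1) / (d k + d i))
        * ((d k - d 1) / (d k + d 1))
      = (1 - d i / d k) / (1 + d i / d k) := by
  have hdk : 0 < d k := h0.trans h1k
  constructor
  · apply div_pos <;> linarith
  · intro i
    obtain ⟨hi1, hik⟩ := hmono i
    have h1 : d k - d 1 ≠ 0 := by linarith
    have h2 : d k + d 1 ≠ 0 := by linarith
    have h3 : d k + d i ≠ 0 := by linarith
    have h4 : d k ≠ 0 := hdk.ne'
    field_simp
end
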